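/- arXiv:1512.07025 — 3 statements merged into one kernel-verified Lean document; each statement's English description precedes it below -/
import Mathlib

section
/- Let W = W(a,b) be a sequence satisfying the second-order recurrence. Then for all integers s, i, and j, one has U_{s+i}·W_{s+j} − U_s·W_{s+i+j} = (−c₂)^s · U_i · W_j. -/
/-!
A solution of the recurrence is determined by its values at `0` and `1`, which yields the
addition formula `W (m + n) = U m * W (n + 1) + c₂ * U (m - 1) * W n`. Expanding all four
terms on the left by it (with `m = s`, then `m = i`), the `W (j + 1)`-terms cancel and, using
`U (i + 1) = c₁ U i + c₂ U (i - 1)`, the coefficient of `W j` becomes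
`c₂ U i (U (s - 1) U (s + 1) - U s ^ 2)`, which Cassini's identity
`U (n + 1) ^ 2 - U n U (n + 2) = (-c₂) ^ n` evaluates to `(-c₂) ^ s U i`.
-/

theorem eq_zpow_mul_of_forall_add_one {K : Type*} [Field K] {r : K} (hr : r ≠ 0) {f : ℤ → K}
    (h : ∀ n, f (n + 1) = r * f n) (n : ℤ) : f n = r ^ n * f 0 := by
  induction n using Int.induction_on with
  | zero => simp
  | succ n ih => rw [h, ih, zpow_add_one₀ hr]; ring
  | pred n ih =>
    apply mul_left_cancel₀ hr
    rw [← h, sub_add_cancel, ih, ← mul_assoc, ← zpow_one_add₀ hr, add_sub_cancel]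

def IsHoradam {K : Type*} [Field K] (c₁ c₂ : K) (W : ℤ → K) : Prop :=
  ∀ n : ℤ, W n = c₁ * W (n - 1) + c₂ * W (n - 2)

namespace IsHoradam

variable {K : Type*} [Field K] {c₁ c₂ : K} {U W V : ℤ → K}

theorem add_two (hW : IsHoradam c₁ c₂ W) (n : ℤ) : W (n + 2) = c₁ * W (n + 1) + c₂ * W n := by
  simpa [add_sub_assoc] using hW (n + 2)

theorem add_one (hW : IsHoradam c₁ c₂ W) (n : ℤ) : W (n + 1) = c₁ * W n + c₂ * W (n - 1) := by
  simpa [show n - 1 + 2 = n + 1 by ring] using hW.add_two (n - 1)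

theorem linear_comb (hW : IsHoradam c₁ c₂ W) (hV : IsHoradam c₁ c₂ V) (x y : K) :
    IsHoradam c₁ c₂ (fun n => x * W n + y * V n) := by
  intro n
  linear_combination x * hW n + y * hV n

theorem comp_add_const (hW : IsHoradam c₁ c₂ W) (k : ℤ) : IsHoradam c₁ c₂ (fun n => W (n + k)) := by
  intro n
  simpa [sub_add_eq_add_sub] using hW (n + k)

theorem ext (hc₂ : c₂ ≠ 0) (hW : IsHoradam c₁ c₂ W) (hV : IsHoradam c₁ c₂ V)
    (h₀ : W 0 = V 0) (h₁ : W 1 = V 1) : W = V := by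
  suffices H : ∀ n : ℤ, W n = V n ∧ W (n + 1) = V (n + 1) from funext fun n => (H n).1
  intro n
  induction n using Int.induction_on with
  | zero => exact ⟨h₀, h₁⟩
  | succ n ih =>
    refine ⟨ih.2, ?_⟩
    rw [add_assoc, one_add_one_eq_two, hW.add_two, hV.add_two, ih.1, ih.2]
  | pred n ih =>
    refine ⟨?_, by simpa using ih.1⟩
    have hW' := hW.add_two (-n - 1)
    have hV' := hV.add_two (-n - 1)
    rw [show -(n : ℤ) - 1 + 2 = -n + 1 by ring, show -(n : ℤ) - 1 + 1 = -n by ring] at hW' hV'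
    apply mul_left_cancel₀ hc₂
    linear_combination hV' - hW' + ih.2 - c₁ * ih.1

theorem add_formula (hc₂ : c₂ ≠ 0) (hW : IsHoradam c₁ c₂ W) (hU : IsHoradam c₁ c₂ U)
    (hU₀ : U 0 = 0) (hU₁ : U 1 = 1) (m n : ℤ) :
    W (m + n) = U m * W (n + 1) + c₂ * U (m - 1) * W n := by
  have hUpred : IsHoradam c₁ c₂ (fun m => U (m - 1)) := by
    simpa only [sub_eq_add_neg] using hU.comp_add_const (-1)
  have hUneg : c₂ * U (-1) = 1 := by simpa [hU₀, hU₁] using (hU.add_two (-1)).symm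
  have h := hW.comp_add_const n |>.ext hc₂ (hU.linear_comb hUpred (W (n + 1)) (c₂ * W n))
    (by simp only [zero_add, zero_sub, hU₀]; linear_combination W n * hUneg.symm)
    (by simp [hU₀, hU₁, add_comm])
  linear_combination congrFun h m

theorem cassini (hc₂ : c₂ ≠ 0) (hU : IsHoradam c₁ c₂ U) (hU₀ : U 0 = 0) (hU₁ : U 1 = 1) (n : ℤ) :
    U (n + 1) ^ 2 - U n * U (n + 2) = (-c₂) ^ n := by
  have step (n : ℤ) : U (n + 1 + 1) ^ 2 - U (n + 1) * U (n + 1 + 2) =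
      -c₂ * (U (n + 1) ^ 2 - U n * U (n + 2)) := by
    have h₁ := hU.add_two n
    have h₂ := hU.add_two (n + 1)
    rw [show n + 1 + 1 = n + 2 by ring] at h₂ ⊢
    linear_combination (-U (n + 1)) * h₂ + U (n + 2) * h₁
  simpa [hU₀, hU₁] using eq_zpow_mul_of_forall_add_one (neg_ne_zero.2 hc₂)
    (f := fun n => U (n + 1) ^ 2 - U n * U (n + 2)) step n

end IsHoradam

theorem catalan_UW_general (c₁ c₂ : ℝ) (hc₂ : c₂ ≠ 0)
    (W U : ℤ → ℝ)
    (hW : ∀ n : ℤ, W n = c₁ * W (n - 1) + c₂ * W (n - 2))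
    (hU0 : U 0 = 0) (hU1 : U 1 = 1)
    (hU : ∀ n : ℤ, U n = c₁ * U (n - 1) + c₂ * U (n - 2)) :
    ∀ s i j : ℤ, U (s + i) * W (s + j) - U s * W (s + i + j) =
      (-c₂) ^ s * U i * W j := by
  intro s i j
  have hWadd := IsHoradam.add_formula hc₂ hW hU hU0 hU1
  have hUadd := IsHoradam.add_formula hc₂ hU hU hU0 hU1
  have hWij : W (i + j + 1) = U (i + 1) * W (j + 1) + c₂ * U i * W j := by
    rw [← add_right_comm, hWadd, add_sub_cancel_right]
  have hUi := IsHoradam.add_one hU i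
  have hUs := IsHoradam.add_one hU s
  have hcas : U s ^ 2 - U (s - 1) * U (s + 1) = (-c₂) ^ (s - 1) := by
    simpa [sub_add_cancel, show s - 1 + 2 = s + 1 by ring] using
      IsHoradam.cassini hc₂ hU hU0 hU1 (s - 1)
  have hpow : (-c₂) ^ s = (-c₂) ^ (s - 1) * -c₂ := by
    rw [← zpow_add_one₀ (neg_ne_zero.2 hc₂), sub_add_cancel]
  rw [hUadd s i, hWadd s j, add_assoc s i j, hWadd s (i + j), hWadd i j, hWij]
  linear_combination W j * (c₂ * U s * U (s - 1) * hUi - c₂ * U i * hcas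
    - c₂ * U i * U (s - 1) * hUs - U i * hpow)

/-- Identity (7): `U_{s+i}·W_{s+j} − U_s·W_{s+i+j} = (−c₂)^s · U_i · W_j`. -/
theorem catalan_UW (c₁ c₂ : ℝ) (hc₂ : c₂ ≠ 0)
    (a b : ℝ) (W U : ℤ → ℝ)
    (hW0 : W 0 = a) (hW1 : W 1 = b)
    (hW : ∀ n : ℤ, W n = c₁ * W (n - 1) + c₂ * W (n - 2))
    (hU0 : U 0 = 0) (hU1 : U 1 = 1)
    (hU : ∀ n : ℤ, U n = c₁ * U (n - 1) + c₂ * U (n - 2)) :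
    ∀ s i j : ℤ, U (s + i) * W (s + j) - U s * W (s + i + j) =
      (-c₂) ^ s * U i * W j :=
  catalan_UW_general c₁ c₂ hc₂ W U hW hU0 hU1 hU
end

section
/- Let W = W(a,b) be a sequence satisfying the second-order recurrence, with discriminant Δ = b² − c₁·a·b − c₂·a². Then for all integers s, i, and j, one has W_{s+i}·W_{s+j} − W_s·W_{s+i+j} = (−c₂)^s · Δ · U_i · U_j. -/
/-!
For fixed `s` and `j`, the left side is a solution of the recurrence in `i` vanishing at `i = 0`;
as `c₂ ≠ 0`, such a solution is its value at `i = 1` times `U i`. That value,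
`W (s+1) W (s+j) - W s W (s+1+j)`, is in turn a solution in `j` vanishing at `j = 0`, hence equals
`(W (s+1)² - W s W (s+2)) U j`; finally the recurrence multiplies `W (s+1)² - W s W (s+2)` by `-c₂`
at each step of `s`.
-/

theorem eq_zpow_mul_of_add_one {G₀ : Type*} [CommGroupWithZero G₀] {r : G₀} {g : ℤ → G₀}
    (hr : r ≠ 0) (hg : ∀ n, g (n + 1) = r * g n) (n : ℤ) : g n = r ^ n * g 0 := by
  induction n using Int.induction_on with
  | zero => simp
  | succ i ih => rw [hg, ih, zpow_add_one₀ hr, mul_left_comm, mul_assoc]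
  | pred i ih =>
    have h := hg (-i - 1)
    rw [sub_add_cancel, ih] at h
    rw [zpow_sub_one₀ hr, mul_right_comm, h, mul_comm r, mul_inv_cancel_right₀ hr]

def IsLinRec {R : Type*} [CommRing R] (c₁ c₂ : R) (f : ℤ → R) : Prop :=
  ∀ n, f (n + 2) = c₁ * f (n + 1) + c₂ * f n

namespace IsLinRec

section CommRing

variable {R : Type*} [CommRing R] {c₁ c₂ : R} {f g : ℤ → R}

theorem of_sub (h : ∀ n, f n = c₁ * f (n - 1) + c₂ * f (n - 2)) : IsLinRec c₁ c₂ f := by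
  intro n
  simpa only [add_sub_cancel_right, show n + 2 - 1 = n + 1 by ring] using h (n + 2)

theorem shift (hf : IsLinRec c₁ c₂ f) (k : ℤ) : IsLinRec c₁ c₂ (fun n => f (k + n)) := by
  intro n
  simpa only [add_assoc] using hf (k + n)

theorem sub (hf : IsLinRec c₁ c₂ f) (hg : IsLinRec c₁ c₂ g) :
    IsLinRec c₁ c₂ (fun n => f n - g n) := by
  intro n
  simp only [hf n, hg n]
  ring

theorem const_mul (hf : IsLinRec c₁ c₂ f) (a : R) : IsLinRec c₁ c₂ (fun n => a * f n) := by
  intro n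
  simp only [hf n]
  ring

theorem mul_const (hf : IsLinRec c₁ c₂ f) (a : R) : IsLinRec c₁ c₂ (fun n => f n * a) := by
  intro n
  simp only [hf n]
  ring

theorem eq_zero [NoZeroDivisors R] (hc₂ : c₂ ≠ 0) (hf : IsLinRec c₁ c₂ f)
    (h0 : f 0 = 0) (h1 : f 1 = 0) (n : ℤ) : f n = 0 := by
  let P : ℤ → Prop := fun n => f n = 0 ∧ f (n + 1) = 0
  have forward (n : ℤ) (hn : P n) : P (n + 1) :=
    ⟨hn.2, by rw [add_assoc, one_add_one_eq_two, hf n, hn.1, hn.2]; ring⟩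
  have backward (n : ℤ) (hn : P (n + 1)) : P n := by
    have h := hf n
    rw [← one_add_one_eq_two, ← add_assoc, hn.1, hn.2, mul_zero, zero_add, eq_comm,
      mul_eq_zero] at h
    exact ⟨h.resolve_left hc₂, hn.1⟩
  suffices P n from this.1
  induction n using Int.induction_on with
  | zero => exact ⟨h0, by simpa using h1⟩
  | succ i ih => exact forward i ih
  | pred i ih => exact backward _ (by simpa using ih)

theorem eq_mul_of_apply_zero [NoZeroDivisors R] (hc₂ : c₂ ≠ 0) {U : ℤ → R}
    (hf : IsLinRec c₁ c₂ f) (hU : IsLinRec c₁ c₂ U) (hU0 : U 0 = 0) (hU1 : U 1 = 1)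
    (hf0 : f 0 = 0) (n : ℤ) : f n = f 1 * U n := by
  have h := (hf.sub (hU.const_mul (f 1))).eq_zero hc₂ (by simp [hf0, hU0]) (by simp [hU1]) n
  exact sub_eq_zero.mp h

theorem catalan [NoZeroDivisors R] (hc₂ : c₂ ≠ 0) {W U : ℤ → R}
    (hW : IsLinRec c₁ c₂ W) (hU : IsLinRec c₁ c₂ U) (hU0 : U 0 = 0) (hU1 : U 1 = 1)
    (s i j : ℤ) :
    W (s + i) * W (s + j) - W s * W (s + i + j) =
      (W (s + 1) ^ 2 - W s * W (s + 2)) * U i * U j := by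
  have hrow : IsLinRec c₁ c₂ fun j => W (s + 1) * W (s + j) - W s * W (s + 1 + j) :=
    ((hW.shift s).const_mul _).sub ((hW.shift (s + 1)).const_mul _)
  have hcol : IsLinRec c₁ c₂ fun i => W (s + i) * W (s + j) - W s * W (s + i + j) := by
    simpa only [add_right_comm s _ j] using
      ((hW.shift s).mul_const _).sub ((hW.shift (s + j)).const_mul _)
  have hi := eq_mul_of_apply_zero hc₂ hcol hU hU0 hU1 (by simp) i
  have hj := eq_mul_of_apply_zero hc₂ hrow hU hU0 hU1 (by simp [mul_comm]) j
  simp only [add_assoc s 1 1, one_add_one_eq_two] at hi hj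
  rw [hi, hj]
  ring

end CommRing

theorem sq_sub_mul_eq_zpow_mul {K : Type*} [Field K] {c₁ c₂ : K} {W : ℤ → K} (hc₂ : c₂ ≠ 0)
    (hW : IsLinRec c₁ c₂ W) (s : ℤ) :
    W (s + 1) ^ 2 - W s * W (s + 2) = (-c₂) ^ s * (W 1 ^ 2 - W 0 * W 2) := by
  let D : ℤ → K := fun s => W (s + 1) ^ 2 - W s * W (s + 2)
  have hD (s : ℤ) : D (s + 1) = -c₂ * D s := by
    have h₃ := hW (s + 1)
    have h₂ := hW s
    simp only [D, add_assoc, one_add_one_eq_two, show (1 : ℤ) + 2 = 2 + 1 by norm_num] at h₃ h₂ ⊢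
    rw [h₃, h₂]
    ring
  exact eq_zpow_mul_of_add_one (neg_ne_zero.mpr hc₂) hD s

end IsLinRec

/-- Identity (8): `W_{s+i}·W_{s+j} − W_s·W_{s+i+j} = (−c₂)^s · Δ · U_i · U_j`,
where `Δ = b² − c₁·a·b − c₂·a²`. -/
theorem catalan_WW (c₁ c₂ : ℝ) (hc₂ : c₂ ≠ 0)
    (a b : ℝ) (W U : ℤ → ℝ)
    (hW0 : W 0 = a) (hW1 : W 1 = b)
    (hW : ∀ n : ℤ, W n = c₁ * W (n - 1) + c₂ * W (n - 2))
    (hU0 : U 0 = 0) (hU1 : U 1 = 1)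
    (hU : ∀ n : ℤ, U n = c₁ * U (n - 1) + c₂ * U (n - 2)) :
    ∀ s i j : ℤ, W (s + i) * W (s + j) - W s * W (s + i + j) =
      (-c₂) ^ s * (b ^ 2 - c₁ * a * b - c₂ * a ^ 2) * U i * U j := by
  intro s i j
  have hW' := IsLinRec.of_sub hW
  have hW2 : W 2 = c₁ * b + c₂ * a := by simpa [hW0, hW1] using hW' 0
  rw [IsLinRec.catalan hc₂ hW' (.of_sub hU) hU0 hU1, IsLinRec.sq_sub_mul_eq_zpow_mul hc₂ hW',
    hW0, hW1, hW2]
  ring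
end

section
/- Let r be a natural number, and let a₁, …, a_r, b₁, …, b_r, α₁, …, α_r, β₁, …, β_r, X₀, …, X_r, Y₀, …, Y_r be real numbers. Then the determinant of the (r+1)×(r+1) matrix whose (i,j) entry (0 ≤ i, j ≤ r) is ∏_{ℓ=j+1}^{r} (a_ℓ·X_i + b_ℓ·Y_i) · ∏_{m=1}^{j} (α_m·X_i + β_m·Y_i) equals ∏_{0 ≤ i < j ≤ r} (X_i·Y_j − X_j·Y_i) · ∏_{1 ≤ i ≤ j ≤ r} (β_i·a_j − α_i·b_j). -/
/-!
Column `j` of the matrix lists the values at the points `(Y i, X i)` of the degree-`r`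
homogenization of `q_j(t) = ∏_{ℓ > j} (a_ℓ + b_ℓ t) · ∏_{m ≤ j} (α_m + β_m t)`. So the matrix is
a projective Vandermonde matrix in the points times the coefficient matrix `C` of
`q_0, …, q_r`, and its determinant is `∏_{i < j} (X_i Y_j - X_j Y_i) · det C`.

At the points `(X_i, Y_i) = (-b_i, a_i)` the factor `a_i X + b_i Y` kills every entry below the
diagonal, and the Vandermonde factor becomes `∏_{i < j} (a_i b_j - a_j b_i)`. Comparing the two
evaluations computes `det C` over a domain whenever that factor is nonzero, in particular for
indeterminates `a, b, α, β` over `ℤ`; specializing them gives `det C` over any commutative ring.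
-/

open Finset

namespace Polynomial

section CommSemiring

variable {R : Type*} [CommSemiring R]

theorem eval_homogenize_eq_sum (p : R[X]) (n : ℕ) (x : Fin 2 → R) :
    MvPolynomial.eval x (p.homogenize n) =
      ∑ k ∈ range (n + 1), p.coeff k * x 0 ^ k * x 1 ^ (n - k) := by
  simp only [homogenize, Nat.sum_antidiagonal_eq_sum_range_succ_mk, MvPolynomial.eval_sum]
  refine sum_congr rfl fun k _ ↦ ?_
  rw [MvPolynomial.eval_monomial, Finsupp.update_eq_add_single, Finsupp.prod_add_index',
    Finsupp.prod_single_index, Finsupp.prod_single_index]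
  · ring
  all_goals simp [pow_add]

theorem natDegree_prod_linear_le {ι : Type*} (s : Finset ι) (c d : ι → R) :
    (∏ i ∈ s, (C (c i) * X + C (d i))).natDegree ≤ #s := by
  simpa using (natDegree_prod_le _ _).trans (sum_le_sum fun i (_ : i ∈ s) => natDegree_linear_le)

theorem homogenize_prod_linear {ι : Type*} (s : Finset ι) (c d : ι → R) :
    (∏ i ∈ s, (C (c i) * X + C (d i))).homogenize #s =
      ∏ i ∈ s, (C (c i) * X + C (d i)).homogenize 1 := by
  simpa using homogenize_finsetProd (n := fun _ => 1) fun i _ => natDegree_linear_le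

end CommSemiring

end Polynomial

theorem Fin.prod_Ioi_eq_prod_Icc {M : Type*} [CommMonoid M] {n : ℕ} (f : ℕ → M)
    (i : Fin (n + 1)) : ∏ j ∈ Ioi i, f j = ∏ j ∈ Icc ((i : ℕ) + 1) n, f j := by
  have hIcc : Icc ((i : ℕ) + 1) n = Ioo (i : ℕ) (n + 1) := by ext; simp
  rw [hIcc, ← Fin.map_valEmbedding_Ioi, prod_map]
  rfl

theorem MvPolynomial.X_mul_X_sub_X_mul_X_ne_zero {σ : Type*} {p q s t : σ} (hs : s ≠ p)
    (ht : t ≠ p) : (X p * X q - X s * X t : MvPolynomial σ ℤ) ≠ 0 := by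
  classical
  intro h
  have := congrArg (eval fun v => if v = p then (2 : ℤ) else 1) h
  simp only [map_sub, map_mul, eval_X, if_pos, hs, ht, if_false, map_zero] at this
  split_ifs at this <;> norm_num at this

namespace Matrix

open Polynomial

variable {R : Type*} [CommRing R]

theorem of_eval_homogenize_eq_projVandermonde_mul {n : ℕ} (p : Fin (n + 1) → R[X])
    (v w : Fin (n + 1) → R) :
    (of fun i j => MvPolynomial.eval ![v i, w i] ((p j).homogenize n)) =
      projVandermonde v w * of fun (k j : Fin (n + 1)) => (p j).coeff k := by
  ext i j
  rw [of_apply, eval_homogenize_eq_sum, mul_apply, ← Fin.sum_univ_eq_sum_range]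
  refine sum_congr rfl fun k _ ↦ ?_
  simp [projVandermonde_apply]
  ring

end Matrix

namespace Krattenthaler

open Polynomial Matrix

variable {R : Type*} [CommRing R] (r : ℕ) (a b α β : ℕ → R)

noncomputable def columnPoly (j : ℕ) : R[X] :=
  (∏ ℓ ∈ Icc (j + 1) r, (C (b ℓ) * X + C (a ℓ))) * ∏ m ∈ Icc 1 j, (C (β m) * X + C (α m))

def kratMatrix (x y : Fin (r + 1) → R) : Matrix (Fin (r + 1)) (Fin (r + 1)) R :=
  of fun i j => (∏ ℓ ∈ Icc ((j : ℕ) + 1) r, (a ℓ * x i + b ℓ * y i)) *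
    ∏ m ∈ Icc 1 (j : ℕ), (α m * x i + β m * y i)

theorem eval_homogenize_columnPoly {j : ℕ} (hj : j ≤ r) (x y : R) :
    MvPolynomial.eval ![y, x] ((columnPoly r a b α β j).homogenize r) =
      (∏ ℓ ∈ Icc (j + 1) r, (a ℓ * x + b ℓ * y)) * ∏ m ∈ Icc 1 j, (α m * x + β m * y) := by
  have hmul := homogenize_mul _ _ (natDegree_prod_linear_le (Icc (j + 1) r) b a)
    (natDegree_prod_linear_le (Icc 1 j) β α)
  rw [show #(Icc (j + 1) r) + #(Icc 1 j) = r by simp; omega] at hmul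
  rw [columnPoly, hmul, homogenize_prod_linear, homogenize_prod_linear]
  simp [add_comm]

theorem kratMatrix_eq_projVandermonde_mul (x y : Fin (r + 1) → R) :
    kratMatrix r a b α β x y =
      projVandermonde y x * of fun (k j : Fin (r + 1)) => (columnPoly r a b α β j).coeff k := by
  rw [← of_eval_homogenize_eq_projVandermonde_mul]
  ext i j
  simp [kratMatrix, eval_homogenize_columnPoly _ _ _ _ _ j.is_le]

theorem det_kratMatrix_eq_mul (x y : Fin (r + 1) → R) :
    (kratMatrix r a b α β x y).det = (∏ i, ∏ j ∈ Ioi i, (x i * y j - x j * y i)) *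
      (of fun (k j : Fin (r + 1)) => (columnPoly r a b α β j).coeff k).det := by
  rw [kratMatrix_eq_projVandermonde_mul, det_mul, det_projVandermonde]
  simp_rw [mul_comm (y _) (x _)]

theorem kratMatrix_isUpperTriangular :
    (kratMatrix r a b α β (fun i => -b i) (fun i => a i)).IsUpperTriangular := by
  intro i j hji
  refine mul_eq_zero_of_left (prod_eq_zero (i := (i : ℕ)) (mem_Icc.2 ⟨hji, i.is_le⟩) ?_) _
  ring

theorem kratMatrix_diag (i : Fin (r + 1)) :
    kratMatrix r a b α β (fun i => -b i) (fun i => a i) i i =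
      (∏ ℓ ∈ Icc ((i : ℕ) + 1) r, (a i * b ℓ - a ℓ * b i)) *
        ∏ m ∈ Icc 1 (i : ℕ), (β m * a i - α m * b i) := by
  simp only [kratMatrix, of_apply]
  congr 1 <;> exact prod_congr rfl fun _ _ => by ring

theorem det_columnPoly_coeff_of_isDomain [IsDomain R]
    (hab : ∀ i j, i < j → j ≤ r → a i * b j - a j * b i ≠ 0) :
    (of fun (k j : Fin (r + 1)) => (columnPoly r a b α β j).coeff k).det =
      ∏ j ∈ Icc 1 r, ∏ i ∈ Icc 1 j, (β i * a j - α i * b j) := by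
  have hV : ∏ i : Fin (r + 1), ∏ j ∈ Ioi i, (-b i * a j - -b j * a i) =
      ∏ i ∈ range (r + 1), ∏ j ∈ Icc (i + 1) r, (a i * b j - a j * b i) := by
    rw [← Fin.prod_univ_eq_prod_range]
    refine prod_congr rfl fun i _ => ?_
    rw [Fin.prod_Ioi_eq_prod_Icc (fun j => -b i * a j - -b j * a i)]
    exact prod_congr rfl fun _ _ => by ring
  have hV0 : ∏ i ∈ range (r + 1), ∏ j ∈ Icc (i + 1) r, (a i * b j - a j * b i) ≠ 0 :=
    prod_ne_zero_iff.2 fun i _ => prod_ne_zero_iff.2 fun j hj => by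
      rw [mem_Icc] at hj
      exact hab i j (by omega) hj.2
  have hdiag : ∏ i ∈ range (r + 1), ∏ m ∈ Icc 1 i, (β m * a i - α m * b i) =
      ∏ j ∈ Icc 1 r, ∏ i ∈ Icc 1 j, (β i * a j - α i * b j) := by
    refine (prod_subset (fun j hj => ?_) fun j hj hj' => ?_).symm
    · simp only [mem_Icc, mem_range] at hj ⊢; omega
    · have : j = 0 := by simp only [mem_Icc, mem_range, not_and, not_le] at hj hj'; omega
      simp [this]
  have hdet := det_of_isUpperTriangular (kratMatrix_isUpperTriangular r a b α β)
  rw [det_kratMatrix_eq_mul, hV] at hdet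
  refine mul_left_cancel₀ hV0 ?_
  rw [hdet, ← hdiag, ← prod_mul_distrib, ← Fin.prod_univ_eq_prod_range]
  exact prod_congr rfl fun i _ => kratMatrix_diag r a b α β i

theorem columnPoly_map {S : Type*} [CommRing S] (f : R →+* S) (j : ℕ) :
    (columnPoly r a b α β j).map f = columnPoly r (f ∘ a) (f ∘ b) (f ∘ α) (f ∘ β) j := by
  simp [columnPoly, Polynomial.map_prod]

theorem det_columnPoly_coeff :
    (of fun (k j : Fin (r + 1)) => (columnPoly r a b α β j).coeff k).det =
      ∏ j ∈ Icc 1 r, ∏ i ∈ Icc 1 j, (β i * a j - α i * b j) := by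
  let g : Fin 4 → ℕ → MvPolynomial (Fin 4 × ℕ) ℤ := fun k ℓ => MvPolynomial.X (k, ℓ)
  let φ := MvPolynomial.eval₂Hom (Int.castRingHom R) fun v : Fin 4 × ℕ => ![a, b, α, β] v.1 v.2
  have hφ : ∀ k, φ ∘ g k = ![a, b, α, β] k := fun k => funext fun ℓ => by simp [φ, g]
  have hg := congrArg φ <| det_columnPoly_coeff_of_isDomain r (g 0) (g 1) (g 2) (g 3)
    fun i j hij _ => MvPolynomial.X_mul_X_sub_X_mul_X_ne_zero (by simp [hij.ne']) (by simp)
  rw [RingHom.map_det, RingHom.mapMatrix_apply] at hg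
  convert hg using 2
  · ext k j
    rw [map_apply, of_apply, of_apply, ← coeff_map, columnPoly_map, hφ, hφ, hφ, hφ]
    rfl
  · simp [φ, g]

theorem det_kratMatrix (x y : Fin (r + 1) → R) :
    (kratMatrix r a b α β x y).det = (∏ i, ∏ j ∈ Ioi i, (x i * y j - x j * y i)) *
      ∏ j ∈ Icc 1 r, ∏ i ∈ Icc 1 j, (β i * a j - α i * b j) := by
  rw [det_kratMatrix_eq_mul, det_columnPoly_coeff]

end Krattenthaler

/-- Identity (12): bilinear form of Krattenthaler's lemma:
`det(∏_{ℓ=j+1}^{r}(a_ℓX_i+b_ℓY_i) · ∏_{m=1}^{j}(α_mX_i+β_mY_i))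
  = ∏_{i<j}(X_iY_j−X_jY_i) · ∏_{1≤i≤j≤r}(β_i a_j − α_i b_j)`. -/
theorem krattenthaler_det_bilinear (r : ℕ) (a b α β : ℕ → ℝ)
    (X Y : Fin (r + 1) → ℝ) :
    Matrix.det (Matrix.of fun i j : Fin (r + 1) =>
        (∏ ℓ ∈ Finset.Icc ((j : ℕ) + 1) r, (a ℓ * X i + b ℓ * Y i)) *
        ∏ m ∈ Finset.Icc 1 (j : ℕ), (α m * X i + β m * Y i)) =
      (∏ i : Fin (r + 1), ∏ j ∈ Finset.Ioi i, (X i * Y j - X j * Y i)) *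
      ∏ j ∈ Finset.Icc 1 r, ∏ i ∈ Finset.Icc 1 j, (β i * a j - α i * b j) :=
  Krattenthaler.det_kratMatrix r a b α β X Y
end
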